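/- Let n ≥ 2 and define the Legendrian lift of the inside-out wrinkle F : ℝ × ℝ^{n−1} → ℝⁿ × ℝⁿ × ℝ by x₁ = u³ + 3u(‖v‖² − 1), (x₂,…,xₙ) = v, y₁ = (u² + ‖v‖² − 1)/3, (y₂,…,yₙ) = 2u(‖v‖² − 1 − (1/3)u²)·v, z = u⁵/5 + (2/3)u³(‖v‖² − 1) + u(‖v‖² − 1)². Then F is injective, satisfies the Legendrian condition Dz(p) = Σᵢ yᵢ(p)·Dxᵢ(p) at every point, and the set of points where DF fails to be injective is exactly the sphere {(u, v) : u = 0, ‖v‖ = 1}. -/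

import Mathlib

/-!
Write `δ = ‖v‖² − 1`. Two points with the same image share `v`, and `y₁ = (u² + δ)/3` recovers
`u²`, so `u' = ±u`. The front `(x₁, z)` is odd in `u`, hence `u' = −u` forces `x₁ = z = 0` at `u`,
and `z − (u²/9 + δ/3)·x₁ = 4u⁵/45` then gives `u = 0`.

The Legendrian identity is a direct computation with `dδ = 2⟪v, dv⟫`. A kernel vector of `DF` has
`dv = 0`, and then `dx₁ = 3(u² + δ) du` and `dy₁ = (2/3) u du` both vanish with `du ≠ 0` only at
`u = δ = 0`, where indeed the whole lift is stationary in the `u`-direction.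
-/

theorem eq_zero_of_front_eq_zero {u d : ℝ} (hx : u ^ 3 + 3 * u * d = 0)
    (hz : u ^ 5 / 5 + 2 / 3 * u ^ 3 * d + u * d ^ 2 = 0) : u = 0 :=
  eq_zero_of_pow_eq_zero (n := 5) <| by
    linear_combination (45 / 4) * (hz - (u ^ 2 / 9 + d / 3) * hx)

noncomputable section

open ContinuousLinearMap

variable {E : Type*} [NormedAddCommGroup E] [InnerProductSpace ℝ E]

def wrinkleX (p : ℝ × E) : ℝ := p.1 ^ 3 + 3 * p.1 * (‖p.2‖ ^ 2 - 1)

def wrinkleY (p : ℝ × E) : ℝ := (p.1 ^ 2 + ‖p.2‖ ^ 2 - 1) / 3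

def wrinkleYr (p : ℝ × E) : E := (2 * p.1 * (‖p.2‖ ^ 2 - 1 - (1 / 3) * p.1 ^ 2)) • p.2

def wrinkleZ (p : ℝ × E) : ℝ :=
  p.1 ^ 5 / 5 + 2 / 3 * p.1 ^ 3 * (‖p.2‖ ^ 2 - 1) + p.1 * (‖p.2‖ ^ 2 - 1) ^ 2

def wrinkle (p : ℝ × E) : (ℝ × E) × (ℝ × E) × ℝ :=
  ((wrinkleX p, p.2), (wrinkleY p, wrinkleYr p), wrinkleZ p)

theorem wrinkle_injective : Function.Injective (wrinkle (E := E)) := by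
  rintro ⟨u, v⟩ ⟨u', v'⟩ h
  simp only [wrinkle, wrinkleX, wrinkleY, wrinkleZ, Prod.mk.injEq] at h
  obtain ⟨⟨hx, rfl⟩, ⟨hy, -⟩, hz⟩ := h
  rcases sq_eq_sq_iff_eq_or_eq_neg.mp (by linarith : u ^ 2 = u' ^ 2) with rfl | rfl
  · rfl
  · have hu' : u' = 0 := eq_zero_of_front_eq_zero (d := ‖v‖ ^ 2 - 1)
      (by linear_combination -hx / 2) (by linear_combination -hz / 2)
    simp [hu']

theorem hasFDerivAt_norm_sq_snd_sub_one (p : ℝ × E) :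
    HasFDerivAt (fun q : ℝ × E => ‖q.2‖ ^ 2 - 1) (2 • (innerSL ℝ p.2).comp (snd ℝ ℝ E)) p :=
  hasFDerivAt_snd.norm_sq.sub_const 1

theorem fderiv_wrinkleX_apply (p w : ℝ × E) :
    fderiv ℝ wrinkleX p w = 3 * (p.1 ^ 2 + (‖p.2‖ ^ 2 - 1)) * w.1 + 6 * p.1 * inner ℝ p.2 w.2 := by
  have h : HasFDerivAt wrinkleX _ p := (hasFDerivAt_fst.pow 3).add
    ((hasFDerivAt_fst.const_mul 3).mul (hasFDerivAt_norm_sq_snd_sub_one p))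
  rw [h.fderiv]
  simp only [Nat.add_one_sub_one, nsmul_eq_mul, Nat.cast_ofNat, add_apply, smul_apply, coe_fst',
    smul_eq_mul, comp_apply, coe_snd', coe_innerSL_apply]
  ring

theorem fderiv_wrinkleY_apply (p w : ℝ × E) :
    fderiv ℝ wrinkleY p w = 2 / 3 * p.1 * w.1 + 2 / 3 * inner ℝ p.2 w.2 := by
  have h : HasFDerivAt wrinkleY _ p :=
    (((hasFDerivAt_fst.pow 2).add hasFDerivAt_snd.norm_sq).sub_const 1).mul_const 3⁻¹
  rw [h.fderiv]
  simp only [Nat.add_one_sub_one, pow_one, nsmul_eq_mul, Nat.cast_ofNat, smul_add, add_apply,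
    smul_apply, coe_fst', smul_eq_mul, comp_apply, coe_snd', coe_innerSL_apply]
  ring

theorem fderiv_wrinkleYr_apply (p w : ℝ × E) :
    fderiv ℝ wrinkleYr p w
      = ((2 * (‖p.2‖ ^ 2 - 1) - 2 * p.1 ^ 2) * w.1 + 4 * p.1 * inner ℝ p.2 w.2) • p.2
        + (2 * p.1 * (‖p.2‖ ^ 2 - 1 - (1 / 3) * p.1 ^ 2)) • w.2 := by
  have h : HasFDerivAt wrinkleYr _ p :=
    ((hasFDerivAt_fst.const_mul 2).mul ((hasFDerivAt_norm_sq_snd_sub_one p).sub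
      ((hasFDerivAt_fst.pow 2).const_mul (1 / 3)))).smul hasFDerivAt_snd
  rw [h.fderiv]
  simp only [one_div, Pi.mul_apply, Pi.sub_apply, Nat.add_one_sub_one, pow_one, nsmul_eq_mul,
    Nat.cast_ofNat, add_apply, smul_apply, coe_snd', smulRight_apply, sub_apply, comp_apply,
    coe_innerSL_apply, coe_fst', smul_eq_mul]
  match_scalars <;> ring

theorem fderiv_wrinkleZ_apply (p w : ℝ × E) :
    fderiv ℝ wrinkleZ p w = (p.1 ^ 2 + (‖p.2‖ ^ 2 - 1)) ^ 2 * w.1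
      + (4 / 3 * p.1 ^ 3 + 4 * p.1 * (‖p.2‖ ^ 2 - 1)) * inner ℝ p.2 w.2 := by
  have hδ := hasFDerivAt_norm_sq_snd_sub_one p
  have h : HasFDerivAt wrinkleZ _ p :=
    (((hasFDerivAt_fst.pow 5).mul_const 5⁻¹).add
      (((hasFDerivAt_fst.pow 3).const_mul (2 / 3)).mul hδ)).add (hasFDerivAt_fst.mul (hδ.pow 2))
  rw [h.fderiv]
  simp only [Nat.add_one_sub_one, nsmul_eq_mul, Nat.cast_ofNat, pow_one, add_apply, smul_apply,
    coe_fst', smul_eq_mul, comp_apply, coe_snd', coe_innerSL_apply]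
  ring

theorem wrinkle_legendrian (p w : ℝ × E) :
    fderiv ℝ wrinkleZ p w = wrinkleY p * fderiv ℝ wrinkleX p w + inner ℝ (wrinkleYr p) w.2 := by
  rw [fderiv_wrinkleZ_apply, fderiv_wrinkleX_apply, wrinkleY, wrinkleYr, real_inner_smul_left]
  ring

theorem fderiv_wrinkle_apply (p w : ℝ × E) :
    fderiv ℝ wrinkle p w = ((fderiv ℝ wrinkleX p w, w.2),
      (fderiv ℝ wrinkleY p w, fderiv ℝ wrinkleYr p w), fderiv ℝ wrinkleZ p w) := by
  -- `fun_prop` has no rule for `‖·‖ ^ 2` and takes it from the context instead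
  have : Differentiable ℝ fun q : ℝ × E => ‖q.2‖ ^ 2 := differentiable_snd.norm_sq ℝ
  have hX : DifferentiableAt ℝ wrinkleX p := by unfold wrinkleX; fun_prop
  have hY : DifferentiableAt ℝ wrinkleY p := by unfold wrinkleY; fun_prop
  have hYr : DifferentiableAt ℝ wrinkleYr p := by unfold wrinkleYr; fun_prop
  have hZ : DifferentiableAt ℝ wrinkleZ p := by unfold wrinkleZ; fun_prop
  have h : HasFDerivAt wrinkle _ p := (hX.hasFDerivAt.prodMk hasFDerivAt_snd).prodMk
    ((hY.hasFDerivAt.prodMk hYr.hasFDerivAt).prodMk hZ.hasFDerivAt)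
  rw [h.fderiv]
  rfl

theorem injective_fderiv_wrinkle_iff (p : ℝ × E) :
    Function.Injective (fderiv ℝ wrinkle p) ↔ ¬ (p.1 = 0 ∧ ‖p.2‖ = 1) := by
  rw [injective_iff_map_eq_zero]
  constructor
  · rintro hinj ⟨hu, hv⟩
    have h : ((1 : ℝ), (0 : E)) = 0 := hinj _ <| by
      simp [fderiv_wrinkle_apply, fderiv_wrinkleX_apply, fderiv_wrinkleY_apply,
        fderiv_wrinkleYr_apply, fderiv_wrinkleZ_apply, hu, hv]
    simp at h
  · intro hsing w hw
    simp only [fderiv_wrinkle_apply, fderiv_wrinkleX_apply, fderiv_wrinkleY_apply,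
      Prod.mk_eq_zero] at hw
    obtain ⟨⟨hx, hw₂⟩, ⟨hy, -⟩, -⟩ := hw
    simp only [hw₂, inner_zero_right, mul_zero, add_zero] at hx hy
    suffices hw₁ : w.1 = 0 from Prod.ext hw₁ hw₂
    by_contra hw₁
    have hu : p.1 = 0 := by simpa [hw₁] using hy
    have hv : ‖p.2‖ ^ 2 = 1 := by
      rw [hu] at hx
      linarith [(mul_eq_zero.mp hx).resolve_right hw₁]
    exact hsing ⟨hu, (pow_eq_one_iff_of_nonneg (norm_nonneg _) two_ne_zero).mp hv⟩

end

theorem stmt_10_general (n : ℕ) :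
    let V := EuclideanSpace ℝ (Fin (n - 1))
    let x1 : ℝ × V → ℝ := fun p => p.1 ^ 3 + 3 * p.1 * (‖p.2‖ ^ 2 - 1)
    let y1 : ℝ × V → ℝ := fun p => (p.1 ^ 2 + ‖p.2‖ ^ 2 - 1) / 3
    let yr : ℝ × V → V := fun p =>
      (2 * p.1 * (‖p.2‖ ^ 2 - 1 - (1 / 3) * p.1 ^ 2)) • p.2
    let z : ℝ × V → ℝ := fun p =>
      p.1 ^ 5 / 5 + 2 / 3 * p.1 ^ 3 * (‖p.2‖ ^ 2 - 1) + p.1 * (‖p.2‖ ^ 2 - 1) ^ 2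
    let F : ℝ × V → (ℝ × V) × (ℝ × V) × ℝ := fun p => ((x1 p, p.2), (y1 p, yr p), z p)
    Function.Injective F ∧
    (∀ p w : ℝ × V,
        fderiv ℝ z p w = y1 p * fderiv ℝ x1 p w + (inner ℝ (yr p) w.2 : ℝ)) ∧
    {p : ℝ × V | ¬ Function.Injective ⇑(fderiv ℝ F p)}
      = {p : ℝ × V | p.1 = 0 ∧ ‖p.2‖ = 1} :=
  ⟨wrinkle_injective, wrinkle_legendrian,
    Set.ext fun p => (not_congr (injective_fderiv_wrinkle_iff p)).trans not_not⟩

/-- The Legendrian lift of the inside-out wrinkle,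
`x₁ = u³ + 3u(‖v‖² − 1)`, `(x₂,…,xₙ) = v`, `y₁ = (u² + ‖v‖² − 1)/3`,
`(y₂,…,yₙ) = 2u(‖v‖² − 1 − (1/3)u²)·v`, `z = u⁵/5 + (2/3)u³(‖v‖² − 1) + u(‖v‖² − 1)²`
(with `n ≥ 2`), is injective, satisfies the Legendrian condition
`Dz(p) = Σᵢ yᵢ(p)·Dxᵢ(p)` at every point, and the set of points where its derivative fails to
be injective is exactly the sphere `{(u, v) : u = 0, ‖v‖ = 1}`. -/
theorem stmt_10 (n : ℕ) (hn : 2 ≤ n) :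
    let V := EuclideanSpace ℝ (Fin (n - 1))
    let x1 : ℝ × V → ℝ := fun p => p.1 ^ 3 + 3 * p.1 * (‖p.2‖ ^ 2 - 1)
    let y1 : ℝ × V → ℝ := fun p => (p.1 ^ 2 + ‖p.2‖ ^ 2 - 1) / 3
    let yr : ℝ × V → V := fun p =>
      (2 * p.1 * (‖p.2‖ ^ 2 - 1 - (1 / 3) * p.1 ^ 2)) • p.2
    let z : ℝ × V → ℝ := fun p =>
      p.1 ^ 5 / 5 + 2 / 3 * p.1 ^ 3 * (‖p.2‖ ^ 2 - 1) + p.1 * (‖p.2‖ ^ 2 - 1) ^ 2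
    let F : ℝ × V → (ℝ × V) × (ℝ × V) × ℝ := fun p => ((x1 p, p.2), (y1 p, yr p), z p)
    Function.Injective F ∧
    (∀ p w : ℝ × V,
        fderiv ℝ z p w = y1 p * fderiv ℝ x1 p w + (inner ℝ (yr p) w.2 : ℝ)) ∧
    {p : ℝ × V | ¬ Function.Injective ⇑(fderiv ℝ F p)}
      = {p : ℝ × V | p.1 = 0 ∧ ‖p.2‖ = 1} :=
  stmt_10_general n
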